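/- Let G be a graph with ∇₀(G) ≤ ∇₀, and let P be a set of vertices each having residual degree exactly i (i.e., exactly i neighbors in a set R), where i > 2∇₀. Then |P| ≤ (∇₀/(i − 2∇₀))·|N[P] ∩ R|. -/
import Mathlib


/-- Twice the number of edges of the subgraph of `G` induced on `s`. -/
def pairCount {V : Type*} [Fintype V] [DecidableEq V] (G : SimpleGraph V)
    [DecidableRel G.Adj] (s : Finset V) : ℕ :=
  (Finset.univ.filter fun p : V × V => p.1 ∈ s ∧ p.2 ∈ s ∧ G.Adj p.1 p.2).card

/-- Density argument for the greedy phase: if every subgraph of `G` has at most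
`∇₀·|V(H)|` edges (stated via doubled edge counts), `R ⊆ V(G)`, and `P` is a set
of vertices each with exactly `i > 2∇₀` neighbors in `R`, then
`|P| ≤ (∇₀/(i - 2∇₀))·|N[P] ∩ R|`. -/
theorem stmt13 {V : Type*} [Fintype V] [DecidableEq V]
    (G : SimpleGraph V) [DecidableRel G.Adj]
    (nab0 : ℕ)
    (hdens : ∀ s : Finset V, pairCount G s ≤ 2 * nab0 * s.card)
    (R : Finset V) (i : ℕ) (hi : 2 * nab0 < i)
    (P : Finset V) (hP : ∀ v ∈ P, (G.neighborFinset v ∩ R).card = i) :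
    (i - 2 * nab0) * P.card
      ≤ nab0 * (R.filter fun w => ∃ v ∈ P, v = w ∨ G.Adj v w).card := by
  classical
  set Q := R.filter (fun w => ∃ v ∈ P, v = w ∨ G.Adj v w) with hQ
  set S := P ∪ Q with hS
  set A := Finset.univ.filter
    (fun p : V × V => p.1 ∈ P ∧ p.2 ∈ G.neighborFinset p.1 ∧ p.2 ∈ R) with hA
  set B := Finset.univ.filter
    (fun p : V × V => p.2 ∈ P ∧ p.1 ∈ G.neighborFinset p.2 ∧ p.1 ∈ R) with hB
  have hAcard : A.card = i * P.card := by
    have hrw : A = P.biUnion (fun v => (G.neighborFinset v ∩ R).image (fun w => (v, w))) := by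
      ext ⟨a, b⟩
      simp only [hA, Finset.mem_filter, Finset.mem_univ, true_and, Finset.mem_biUnion,
        Finset.mem_image, Finset.mem_inter, Prod.mk.injEq]
      constructor
      · rintro ⟨h1, h2, h3⟩; exact ⟨a, h1, b, ⟨h2, h3⟩, rfl, rfl⟩
      · rintro ⟨v, hv, w, hw, rfl, rfl⟩; exact ⟨hv, hw.1, hw.2⟩
    rw [hrw, Finset.card_biUnion]
    · rw [Finset.sum_congr rfl (fun v hv => by
        rw [Finset.card_image_of_injective _ (fun x y h => (Prod.mk.injEq _ _ _ _ ▸ h).2),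
          hP v hv])]
      simp [mul_comm]
    · intro x hx y hy hxy
      simp only [Finset.disjoint_left, Finset.mem_image]
      rintro ⟨a, b⟩ ⟨w, hw, h⟩ ⟨w', hw', h'⟩
      exact hxy ((Prod.mk.inj h).1.trans (Prod.mk.inj h').1.symm)
  have hBcard : B.card = i * P.card := by
    have hrw : B = A.image Prod.swap := by
      ext ⟨a, b⟩
      simp only [hA, hB, Finset.mem_filter, Finset.mem_univ, true_and, Finset.mem_image,
        Prod.exists, Prod.swap_prod_mk, Prod.mk.injEq]
      constructor
      · rintro ⟨h1, h2, h3⟩; exact ⟨b, a, ⟨h1, h2, h3⟩, rfl, rfl⟩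
      · rintro ⟨x, y, h, rfl, rfl⟩; exact h
    rw [hrw, Finset.card_image_of_injective _ Prod.swap_injective, hAcard]
  have hunion : A ∪ B ⊆ Finset.univ.filter
      (fun p : V × V => p.1 ∈ S ∧ p.2 ∈ S ∧ G.Adj p.1 p.2) := by
    intro ⟨a, b⟩ hab
    simp only [Finset.mem_union, hA, hB, Finset.mem_filter, Finset.mem_univ, true_and,
      SimpleGraph.mem_neighborFinset] at hab ⊢
    rcases hab with ⟨h1, h2, h3⟩ | ⟨h1, h2, h3⟩
    · refine ⟨Finset.mem_union_left _ h1, Finset.mem_union_right _ ?_, h2⟩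
      rw [hQ]; exact Finset.mem_filter.2 ⟨h3, a, h1, Or.inr h2⟩
    · refine ⟨Finset.mem_union_right _ ?_, Finset.mem_union_left _ h1, h2.symm⟩
      rw [hQ]; exact Finset.mem_filter.2 ⟨h3, b, h1, Or.inr h2⟩
  have hinter : A ∩ B ⊆ Finset.univ.filter
      (fun p : V × V => p.1 ∈ P ∧ p.2 ∈ P ∧ G.Adj p.1 p.2) := by
    intro ⟨a, b⟩ hab
    simp only [Finset.mem_inter, hA, hB, Finset.mem_filter, Finset.mem_univ, true_and,
      SimpleGraph.mem_neighborFinset] at hab ⊢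
    exact ⟨hab.1.1, hab.2.1, hab.1.2.1⟩
  have key : 2 * (i * P.card) ≤ pairCount G S + pairCount G P := by
    have h1 : (A ∪ B).card + (A ∩ B).card = A.card + B.card :=
      Finset.card_union_add_card_inter A B
    have h2 : (A ∪ B).card ≤ pairCount G S := Finset.card_le_card hunion
    have h3 : (A ∩ B).card ≤ pairCount G P := Finset.card_le_card hinter
    omega
  have hScard : S.card ≤ P.card + Q.card := Finset.card_union_le P Q
  have hS' : pairCount G S ≤ 2 * nab0 * (P.card + Q.card) :=
    le_trans (hdens S) (Nat.mul_le_mul_left _ hScard)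
  have hP' : pairCount G P ≤ 2 * nab0 * P.card := hdens P
  have expand : 2 * (i * P.card) ≤ 2 * nab0 * P.card + 2 * nab0 * Q.card + 2 * nab0 * P.card := by
    calc 2 * (i * P.card) ≤ pairCount G S + pairCount G P := key
    _ ≤ 2 * nab0 * (P.card + Q.card) + 2 * nab0 * P.card := by omega
    _ = 2 * nab0 * P.card + 2 * nab0 * Q.card + 2 * nab0 * P.card := by ring
  rw [Nat.sub_mul, show 2 * nab0 * P.card = 2 * (nab0 * P.card) from by ring]
  have expand2 : 2 * (i * P.card)
      ≤ 2 * (nab0 * P.card) + 2 * (nab0 * Q.card) + 2 * (nab0 * P.card) := by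
    calc 2 * (i * P.card) ≤ 2 * nab0 * P.card + 2 * nab0 * Q.card + 2 * nab0 * P.card := expand
    _ = 2 * (nab0 * P.card) + 2 * (nab0 * Q.card) + 2 * (nab0 * P.card) := by ring
  generalize i * P.card = x at expand2 ⊢
  generalize nab0 * P.card = y at expand2 ⊢
  generalize nab0 * Q.card = z at expand2 ⊢
  omega
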